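/- Let h = ⊕_{i≥0} h(i) be an N-graded Lie algebra over an algebraically closed field k of characteristic 0, with h₊ := ⊕_{i≥1} h(i) ≠ 0, and H the corresponding connected algebraic group. Suppose h₊ is a faithful h(0)-module and there is a (semisimple) element x ∈ h(0) such that [x,y] = j·y for every j and every y ∈ h(j). Then the algebra of regular invariants of the coadjoint representation is trivial: k[h*]^H = k. -/

import Mathlib

noncomputable section

open scoped Classical

/-! ### Generalities: Zariski-type notions on a vector space, stabilisers,
generic stabilisers, tori, invariant fields and algebras. -/

/-- The algebra of polynomial functions on a `k`-vector space `V`, realised as the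
subalgebra of `V → k` generated by the linear functionals. -/
def polyFuns (k V : Type) [CommRing k] [AddCommGroup V] [Module k V] :
    Subalgebra k (V → k) :=
  Algebra.adjoin k (Set.range fun φ : Module.Dual k V => (φ : V → k))

/-- A subset of a vector space is Zariski open if it is a union of complements of
zero loci of polynomial functions. -/
def ZOpen (k V : Type) [CommRing k] [AddCommGroup V] [Module k V] (U : Set V) : Prop :=
  ∃ F : Set (V → k), (∀ f ∈ F, f ∈ polyFuns k V) ∧ U = {v | ∃ f ∈ F, f v ≠ 0}

/-- A dense open subset of `V` (for the Zariski topology on the irreducible variety `V`,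
density of an open subset is equivalent to nonemptiness). -/
def ZDenseOpen (k V : Type) [CommRing k] [AddCommGroup V] [Module k V] (U : Set V) : Prop :=
  ZOpen k V U ∧ U.Nonempty

/-- A subset of `V` is Zariski dense iff the only polynomial function vanishing
identically on it is zero. -/
def ZDense (k V : Type) [CommRing k] [AddCommGroup V] [Module k V] (S : Set V) : Prop :=
  ∀ f ∈ polyFuns k V, (∀ v ∈ S, f v = 0) → f = (0 : V → k)

/-- Stabiliser subgroup of a vector under a linear representation. -/
def repStabilizer {k G V : Type} [CommSemiring k] [Group G] [AddCommMonoid V] [Module k V]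
    (ρ : Representation k G V) (v : V) : Subgroup G where
  carrier := {g | ρ g v = v}
  one_mem' := by simp
  mul_mem' := by
    intro a b ha hb
    simp only [Set.mem_setOf_eq, map_mul, Module.End.mul_apply] at *
    rw [hb, ha]
  inv_mem' := by
    intro g hg
    simp only [Set.mem_setOf_eq] at *
    conv_lhs => rw [← hg]
    rw [← Module.End.mul_apply, ← map_mul, inv_mul_cancel, map_one, Module.End.one_apply]

/-- Two subgroups are conjugate. -/
def ConjSubgroups {G : Type} [Group G] (A B : Subgroup G) : Prop :=
  ∃ g : G, B = A.map (MulAut.conj g).toMonoidHom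

/-- `v` is a generic point for the representation `ρ`: it belongs to a dense open set on
which all stabilisers are conjugate (to that of `v`). -/
def IsGenericVec {k G V : Type} [CommRing k] [Group G] [AddCommGroup V] [Module k V]
    (ρ : Representation k G V) (v : V) : Prop :=
  ∃ Ω : Set V, ZDenseOpen k V Ω ∧ v ∈ Ω ∧
    ∀ w ∈ Ω, ConjSubgroups (repStabilizer ρ v) (repStabilizer ρ w)

/-- The action defined by the representation `ρ` has a generic stabiliser: there is a dense
open subset on which all stabilisers are conjugate. -/
def HasGenericStabilizer {k G V : Type} [CommRing k] [Group G] [AddCommGroup V] [Module k V]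
    (ρ : Representation k G V) : Prop :=
  ∃ Ω : Set V, ZDenseOpen k V Ω ∧
    ∀ v ∈ Ω, ∀ w ∈ Ω, ConjSubgroups (repStabilizer ρ v) (repStabilizer ρ w)

/-- A group is a torus (over `k`) if it is isomorphic to a finite power of `kˣ`. -/
def IsTorus (k : Type) [Field k] (G : Type) [Group G] : Prop :=
  ∃ d : ℕ, Nonempty (G ≃* (Fin d → kˣ))

/-- A group has toral identity component: it contains a normal subgroup of finite
index which is a torus. -/
def HasToralIdentityComponent (k : Type) [Field k] (G : Type) [Group G] : Prop :=
  ∃ T : Subgroup G, T.Normal ∧ T.FiniteIndex ∧ IsTorus k ↥T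

/-! ### Polynomial and rational invariants -/

/-- The coordinate ring `k[V]` of a finite-dimensional vector space. -/
abbrev coordRing (k V : Type) [Field k] [AddCommGroup V] [Module k V] : Type :=
  MvPolynomial (Module.Free.ChooseBasisIndex k V) k

/-- Evaluation of a polynomial on `V` at a point of `V`. -/
def evalAt {k V : Type} [Field k] [AddCommGroup V] [Module k V] (v : V) :
    coordRing k V →ₐ[k] k :=
  MvPolynomial.aeval fun i => (Module.Free.chooseBasis k V).repr v i

/-- The field `k(V)` of rational functions on `V`. -/
abbrev RatFuncField (k V : Type) [Field k] [AddCommGroup V] [Module k V] : Type :=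
  FractionRing (coordRing k V)

/-- The field `k(V)^G` of `G`-invariant rational functions on `V`: a rational function
`q = p₁/p₂` is invariant iff `p₁(g·v) p₂(v) = p₁(v) p₂(g·v)` identically; the collection of
such elements is already a subfield, so taking the generated intermediate field is harmless. -/
def invRatField {k G V : Type} [Field k] [Group G] [AddCommGroup V] [Module k V]
    (ρ : Representation k G V) : IntermediateField k (RatFuncField k V) :=
  IntermediateField.adjoin k
    {q | ∃ p₁ p₂ : coordRing k V, p₂ ≠ 0 ∧
      q * algebraMap (coordRing k V) (RatFuncField k V) p₂ =
        algebraMap (coordRing k V) (RatFuncField k V) p₁ ∧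
      ∀ (g : G) (v : V), evalAt (ρ g v) p₁ * evalAt v p₂ = evalAt v p₁ * evalAt (ρ g v) p₂}

/-- The algebra `k[V]^G` of `G`-invariant polynomial functions on `V` (the invariant
polynomials already form a subalgebra, so taking the generated subalgebra is harmless). -/
def invPolyAlg {k G V : Type} [Field k] [Group G] [AddCommGroup V] [Module k V]
    (ρ : Representation k G V) : Subalgebra k (coordRing k V) :=
  Algebra.adjoin k {p | ∀ (g : G) (v : V), evalAt (ρ g v) p = evalAt v p}

/-- A field extension `K/k` is rational (purely transcendental, finitely generated). -/
def IsRationalExt (k K : Type) [Field k] [Field K] [Algebra k K] : Prop :=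
  ∃ (n : ℕ) (f : Fin n → K), AlgebraicIndependent k f ∧
    IntermediateField.adjoin k (Set.range f) = ⊤

/-- `L` is a purely transcendental extension of `K` (inside the category of
`k`-extensions). -/
def IsPurelyTranscExtOf (k K L : Type) [Field k] [Field K] [Field L] [Algebra k K]
    [Algebra k L] : Prop :=
  ∃ (e : K →ₐ[k] L) (n : ℕ) (f : Fin n → L),
    letI : Algebra K L := e.toRingHom.toAlgebra
    AlgebraicIndependent K f ∧ IntermediateField.adjoin K (Set.range f) = ⊤

end

noncomputable section

open scoped Classical

/-! ### Lie-theoretic generalities -/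

/-- The stabiliser `q_ξ = {x ∈ q | ξ([x,y]) = 0 ∀ y}` of a linear functional `ξ` under the
coadjoint representation of a Lie algebra. -/
def coadjointStab (k : Type) {L : Type} [CommRing k] [LieRing L] [LieAlgebra k L]
    (ξ : Module.Dual k L) : Submodule k L where
  carrier := {x | ∀ y, ξ ⁅x, y⁆ = 0}
  add_mem' := by
    intro a b ha hb y
    rw [add_lie, map_add, ha y, hb y, add_zero]
  zero_mem' := by intro y; rw [zero_lie, map_zero]
  smul_mem' := by
    intro c x hx y
    rw [smul_lie, map_smul, hx y, smul_zero]

/-- The index of a Lie algebra: minimal dimension of the stabiliser of a linear functional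
under the coadjoint representation. -/
def lieIndex (k L : Type) [Field k] [LieRing L] [LieAlgebra k L] : ℕ :=
  ⨅ ξ : Module.Dual k L, Module.finrank k (coadjointStab k ξ)

/-- The representation of `G` on `Module.Dual k V` dual to a representation on `V`
(e.g. the coadjoint representation as the dual of the adjoint one). -/
def coadRep {k G V : Type} [CommRing k] [Group G] [AddCommGroup V] [Module k V]
    (ρ : Representation k G V) : Representation k G (Module.Dual k V) where
  toFun g := (ρ g⁻¹).dualMap
  map_one' := by
    ext φ x
    simp
  map_mul' g h := by
    ext φ x
    simp [mul_inv_rev, map_mul]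

@[simp] lemma coadRep_apply {k G V : Type} [CommRing k] [Group G] [AddCommGroup V]
    [Module k V] (ρ : Representation k G V) (g : G) (φ : Module.Dual k V) (x : V) :
    coadRep ρ g φ x = φ (ρ g⁻¹ x) := rfl

/-- Restriction of a representation to a subgroup acting on an invariant subspace. -/
def subRep {k G V : Type} [CommRing k] [Group G] [AddCommGroup V] [Module k V]
    (ρ : Representation k G V) (K : Subgroup G) (W : Submodule k V)
    (hW : ∀ g : K, ∀ x ∈ W, ρ (g : G) x ∈ W) : Representation k K W where
  toFun g := (ρ (g : G)).restrict (hW g)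
  map_one' := by
    ext x
    simp [LinearMap.restrict_apply]
  map_mul' g h := by
    ext x
    simp [LinearMap.restrict_apply, map_mul]

@[simp] lemma subRep_apply_coe {k G V : Type} [CommRing k] [Group G] [AddCommGroup V]
    [Module k V] (ρ : Representation k G V) (K : Subgroup G) (W : Submodule k V)
    (hW : ∀ g : K, ∀ x ∈ W, ρ (g : G) x ∈ W) (g : K) (x : W) :
    (subRep ρ K W hW g x : V) = ρ (g : G) (x : V) := rfl

/-- Abstract surrogate for a connected algebraic group with Lie algebra `L`, given by its
adjoint representation: every `Ad g` is a Lie algebra automorphism, the group has no proper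
subgroup of finite index (connectedness), and the exponential of every nilpotent inner
derivation is realised by the adjoint action of some group element. -/
structure ConnAlgGroupOf (k L : Type) [Field k] [LieRing L] [LieAlgebra k L]
    [Module.Finite k L] where
  G : Type
  [grp : Group G]
  Ad : Representation k G L
  ad_bracket : ∀ (g : G) (x y : L), Ad g ⁅x, y⁆ = ⁅Ad g x, Ad g y⁆
  connected : ∀ K : Subgroup G, K.FiniteIndex → K = ⊤
  exp_mem : ∀ y : L, IsNilpotent ((LieAlgebra.ad k L) y) →
    ∃ g : G, Ad g = ∑ i ∈ Finset.range (Module.finrank k L + 1),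
      ((i.factorial : k)⁻¹) • (((LieAlgebra.ad k L) y) ^ i)

attribute [instance] ConnAlgGroupOf.grp

/-! ### Borel, parabolic and seaweed subalgebras -/

/-- A Borel subalgebra: a maximal solvable Lie subalgebra. -/
def IsBorelSub (k : Type) {g : Type} [Field k] [LieRing g] [LieAlgebra k g]
    (b : LieSubalgebra k g) : Prop :=
  LieAlgebra.IsSolvable ↥b ∧
    ∀ c : LieSubalgebra k g, LieAlgebra.IsSolvable ↥c → b ≤ c → b = c

/-- A parabolic subalgebra: one containing a Borel subalgebra. -/
def IsParabolicSub (k : Type) {g : Type} [Field k] [LieRing g] [LieAlgebra k g]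
    (p : LieSubalgebra k g) : Prop :=
  ∃ b : LieSubalgebra k g, IsBorelSub k b ∧ b ≤ p

/-- A seaweed subalgebra: the intersection of two weakly opposite parabolic subalgebras
(parabolics `p`, `p'` with `p + p' = g`). -/
def IsSeaweedSub (k : Type) {g : Type} [Field k] [LieRing g] [LieAlgebra k g]
    (s : LieSubalgebra k g) : Prop :=
  ∃ p p' : LieSubalgebra k g, IsParabolicSub k p ∧ IsParabolicSub k p' ∧
    p.toSubmodule ⊔ p'.toSubmodule = ⊤ ∧ s = p ⊓ p'

end

/-!
Let `πⱼ` be the projections of the grading. An invariant polynomial `F` on `h*` satisfies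
`F ξ = F (ξ ∘ π₀)`: the torus element `g_t` moves `ξ` along the polynomial curve
`∑ tʲ • ξ ∘ πⱼ`, on which `F` is constant for `t ≠ 0`, hence also at `t = 0`.
For `y ∈ h(d)` with `d ≥ 1`, the unipotent element `exp (ad y)` maps `ζ ∘ π₀ + φ ∘ π_d` to a
functional whose degree-zero part is `ζ ∘ π₀ + φ ∘ π_d ∘ ad y ∘ π₀`, because `ad y` raises
degrees by `d`. Combined with the first step, `F` is periodic with period
`φ ∘ π_d ∘ ad y ∘ π₀`. Faithfulness of `h₊` says that these periods span the functionals
`ζ ∘ π₀`, so `F ξ = F (ξ ∘ π₀) = F 0`.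
-/

noncomputable section

open Polynomial in
theorem exists_eval_eq_evalAt_sum {k V : Type} [Field k] [AddCommGroup V] [Module k V]
    (q : coordRing k V) (w : ℕ → V) (s : Finset ℕ) :
    ∃ Q : k[X], ∀ t : k, Q.eval t = evalAt (∑ j ∈ s, t ^ j • w j) q := by
  refine ⟨MvPolynomial.aeval
    (fun i => ∑ j ∈ s, C ((Module.Free.chooseBasis k V).repr (w j) i) * X ^ j) q, fun t => ?_⟩
  rw [← coe_aeval_eq_eval, ← AlgHom.comp_apply, MvPolynomial.comp_aeval, evalAt]
  congr 2 with i
  simp only [map_sum, map_mul, aeval_C, aeval_X_pow, Finsupp.finsetSum_apply, map_smul,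
    Finsupp.smul_apply, smul_eq_mul, Algebra.algebraMap_self, RingHom.id_apply, mul_comm]

theorem evalAt_eq_of_forall_ne_zero {k V : Type} [Field k] [Infinite k] [AddCommGroup V]
    [Module k V] (q : coordRing k V) (w : ℕ → V) (N : ℕ) {a : k}
    (h : ∀ t : k, t ≠ 0 → evalAt (∑ j ∈ Finset.range (N + 1), t ^ j • w j) q = a) :
    evalAt (w 0) q = a := by
  obtain ⟨Q, hQ⟩ := exists_eval_eq_evalAt_sum q w (Finset.range (N + 1))
  have hQa : Q = Polynomial.C a := by
    refine Polynomial.eq_of_infinite_eval_eq _ _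
      ((Set.finite_singleton 0).infinite_compl.mono fun t ht => ?_)
    simp only [Polynomial.eval_C, Set.mem_ofPred_eq, hQ]
    exact h t ht
  simpa [Finset.sum_range_succ', hQa] using (hQ 0).symm

theorem eq_C_of_forall_evalAt_eq {k V : Type} [Field k] [Infinite k] [AddCommGroup V]
    [Module k V] [FiniteDimensional k V] {q : coordRing k V} {c : k}
    (h : ∀ v : V, evalAt v q = c) : q = MvPolynomial.C c := by
  refine MvPolynomial.funext fun x => ?_
  set B := Module.Free.chooseBasis k V
  have hx : ⇑(B.repr (B.equivFun.symm x)) = x := by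
    rw [← B.equivFun_apply, LinearEquiv.apply_symm_apply]
  calc MvPolynomial.eval x q = evalAt (B.equivFun.symm x) q := by
        conv_lhs => rw [← hx]
        rfl
    _ = MvPolynomial.eval x (MvPolynomial.C c) := by rw [h, MvPolynomial.eval_C]

theorem invPolyAlg_eq_bot_of_forall_evalAt_eq {k G V : Type} [Field k] [Infinite k] [Group G]
    [AddCommGroup V] [Module k V] [FiniteDimensional k V] (ρ : Representation k G V)
    (h : ∀ q : coordRing k V, (∀ g v, evalAt (ρ g v) q = evalAt v q) →
      ∀ v, evalAt v q = evalAt 0 q) :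
    invPolyAlg ρ = ⊥ := by
  rw [invPolyAlg, eq_bot_iff, Algebra.adjoin_le_iff]
  intro q hq
  rw [SetLike.mem_coe, Algebra.mem_bot, eq_C_of_forall_evalAt_eq (h q hq)]
  exact ⟨_, rfl⟩

theorem evalAt_comp_eq_of_invariant {k G V : Type} [Field k] [Group G] [AddCommGroup V]
    [Module k V] {ρ : Representation k G V} {q : coordRing k (Module.Dual k V)}
    (hq : ∀ g v, evalAt (coadRep ρ g v) q = evalAt v q) (g : G) (ξ : Module.Dual k V) :
    evalAt (ξ ∘ₗ ρ g) q = evalAt ξ q := by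
  have : coadRep ρ g⁻¹ ξ = ξ ∘ₗ ρ g := by ext; simp
  rw [← this, hq]

theorem Function.Periodic.of_mem_span {k V α : Type} [Semiring k] [AddCommMonoid V] [Module k V]
    {f : V → α} {S : Set V} (hS : ∀ s ∈ S, ∀ c : k, Function.Periodic f (c • s)) {β : V}
    (hβ : β ∈ Submodule.span k S) : Function.Periodic f β := by
  suffices ∀ c : k, Function.Periodic f (c • β) by simpa using this 1
  induction hβ using Submodule.span_induction with
  | mem s hs => exact hS s hs
  | zero => simp [Function.Periodic]
  | add x y _ _ hx hy => exact fun c => by simpa [smul_add] using (hx c).add_period (hy c)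
  | smul a x _ hx => exact fun c => by simpa [smul_smul] using hx (c * a)

section GradedProj

variable {ι R M : Type} [DecidableEq ι] [Semiring R] [AddCommMonoid M] [Module R M]
  (ℳ : ι → Submodule R M) [DirectSum.Decomposition ℳ]

def gradedProj (i : ι) : M →ₗ[R] M :=
  (ℳ i).subtype ∘ₗ DirectSum.component R ι (fun i => ℳ i) i ∘ₗ
    (DirectSum.decomposeLinearEquiv ℳ).toLinearMap

theorem gradedProj_mem (i : ι) (x : M) : gradedProj ℳ i x ∈ ℳ i :=
  (DirectSum.decompose ℳ x i).2

theorem gradedProj_of_mem {i : ι} {x : M} (hx : x ∈ ℳ i) : gradedProj ℳ i x = x :=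
  DirectSum.decompose_of_mem_same ℳ hx

theorem gradedProj_of_mem_ne {i j : ι} {x : M} (hx : x ∈ ℳ i) (hij : i ≠ j) :
    gradedProj ℳ j x = 0 :=
  DirectSum.decompose_of_mem_ne ℳ hx hij

theorem gradedProj_comp_self (i : ι) : gradedProj ℳ i ∘ₗ gradedProj ℳ i = gradedProj ℳ i :=
  LinearMap.ext fun x => gradedProj_of_mem ℳ (gradedProj_mem ℳ i x)

theorem gradedProj_comp_of_ne {i j : ι} (hij : i ≠ j) :
    gradedProj ℳ j ∘ₗ gradedProj ℳ i = 0 :=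
  LinearMap.ext fun x => gradedProj_of_mem_ne ℳ (gradedProj_mem ℳ i x) hij

end GradedProj

theorem exists_forall_lt_eq_bot {R M : Type} [Ring R] [AddCommGroup M] [Module R M]
    [IsNoetherian R M] (ℳ : ℕ → Submodule R M) [DirectSum.Decomposition ℳ] :
    ∃ N : ℕ, ∀ j, N < j → ℳ j = ⊥ := by
  obtain ⟨N, hN⟩ := (WellFoundedGT.finite_ne_bot_of_iSupIndep
    (DirectSum.Decomposition.isInternal ℳ).submodule_iSupIndep).bddAbove
  exact ⟨N, fun j hj => by_contra fun hne => (hN hne).not_gt hj⟩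

theorem eq_sum_pow_smul_gradedProj {R M : Type} [CommSemiring R] [AddCommMonoid M] [Module R M]
    (ℳ : ℕ → Submodule R M) [DirectSum.Decomposition ℳ] {N : ℕ} (hN : ∀ j, N < j → ℳ j = ⊥)
    (t : R) {A : M →ₗ[R] M} (hA : ∀ j, ∀ x ∈ ℳ j, A x = t ^ j • x) :
    A = ∑ j ∈ Finset.range (N + 1), t ^ j • gradedProj ℳ j := by
  refine DirectSum.decompose_lhom_ext ℳ fun i => LinearMap.ext fun ⟨x, hx⟩ => ?_
  simp only [LinearMap.comp_apply, Submodule.subtype_apply, hA i x hx, LinearMap.coe_sum,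
    Finset.sum_apply, LinearMap.smul_apply]
  rcases le_or_gt i N with hi | hi
  · rw [Finset.sum_eq_single i
      (fun j _ hji => by rw [gradedProj_of_mem_ne ℳ hx hji.symm, smul_zero])
      (fun h => absurd (Finset.mem_range.2 (Nat.lt_succ_of_le hi)) h), gradedProj_of_mem ℳ hx]
  · simp [(Submodule.mem_bot R).1 (hN i hi ▸ hx)]

section GradedLie

variable {k L : Type} [Field k] [LieRing L] [LieAlgebra k L] {p : ℕ → Submodule k L}

theorem ad_pow_apply_mem (hp : ∀ i j, ∀ x ∈ p i, ∀ y ∈ p j, ⁅x, y⁆ ∈ p (i + j))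
    {d : ℕ} {y : L} (hy : y ∈ p d) (m : ℕ) {j : ℕ} {x : L} (hx : x ∈ p j) :
    (LieAlgebra.ad k L y ^ m) x ∈ p (j + m * d) := by
  induction m with
  | zero => simpa using hx
  | succ m ih =>
    rw [pow_succ', Module.End.mul_apply, LieAlgebra.ad_apply,
      show j + (m + 1) * d = d + (j + m * d) by ring]
    exact hp _ _ _ hy _ ih

variable [DirectSum.Decomposition p]

theorem ad_pow_eq_zero_of_mem (hp : ∀ i j, ∀ x ∈ p i, ∀ y ∈ p j, ⁅x, y⁆ ∈ p (i + j))
    {N : ℕ} (hN : ∀ j, N < j → p j = ⊥) {d : ℕ} (hd : 0 < d) {y : L} (hy : y ∈ p d) :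
    LieAlgebra.ad k L y ^ (N + 1) = 0 := by
  refine DirectSum.decompose_lhom_ext p fun i => LinearMap.ext fun ⟨x, hx⟩ => ?_
  have := ad_pow_apply_mem hp hy (N + 1) hx
  rw [hN _ (by nlinarith)] at this
  simpa using this

theorem comp_truncExp_ad_comp_gradedProj_zero
    (hp : ∀ i j, ∀ x ∈ p i, ∀ y ∈ p j, ⁅x, y⁆ ∈ p (i + j)) {d : ℕ} (hd : 0 < d) {y : L}
    (hy : y ∈ p d) (ζ φ : Module.Dual k L) {M : ℕ} (hM : 2 ≤ M) :
    (ζ ∘ₗ gradedProj p 0 + φ ∘ₗ gradedProj p d) ∘ₗ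
        (∑ i ∈ Finset.range M, ((i.factorial : k)⁻¹) • LieAlgebra.ad k L y ^ i) ∘ₗ
          gradedProj p 0 =
      ζ ∘ₗ gradedProj p 0 + φ ∘ₗ gradedProj p d ∘ₗ LieAlgebra.ad k L y ∘ₗ gradedProj p 0 := by
  obtain ⟨m, rfl⟩ := Nat.exists_eq_add_of_le' hM
  ext x
  have hmem (i : ℕ) : (LieAlgebra.ad k L y ^ i) (gradedProj p 0 x) ∈ p (i * d) := by
    simpa using ad_pow_apply_mem hp hy i (gradedProj_mem p 0 x)
  have hdeg0 (i : ℕ) (hi : i ≠ 0) :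
      gradedProj p 0 ((LieAlgebra.ad k L y ^ i) (gradedProj p 0 x)) = 0 :=
    gradedProj_of_mem_ne p (hmem i) (by positivity)
  have hdegd (i : ℕ) (hi : i ≠ 1) :
      gradedProj p d ((LieAlgebra.ad k L y ^ i) (gradedProj p 0 x)) = 0 :=
    gradedProj_of_mem_ne p (hmem i) fun h => hi (by simpa using (Nat.mul_eq_right hd.ne').1 h)
  simp only [LinearMap.comp_apply, LinearMap.add_apply, LinearMap.coe_sum, Finset.sum_apply,
    LinearMap.smul_apply, map_sum, map_smul, smul_eq_mul]
  rw [Finset.sum_range_succ', Finset.sum_range_succ', Finset.sum_eq_zero fun i _ => by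
    rw [hdeg0 (i + 2) (by omega), hdegd (i + 2) (by omega), map_zero, map_zero, add_zero, mul_zero]]
  have h1 : gradedProj p 0 ⁅y, gradedProj p 0 x⁆ = 0 := by simpa using hdeg0 1 one_ne_zero
  simp [h1, gradedProj_of_mem p (gradedProj_mem p 0 x),
    gradedProj_of_mem_ne p (gradedProj_mem p 0 x) hd.ne, add_comm]

variable (p) in
def adDirections : Set (Module.Dual k L) :=
  {β | ∃ d, 0 < d ∧ ∃ y ∈ p d, ∃ φ : Module.Dual k L,
    β = φ ∘ₗ gradedProj p d ∘ₗ LieAlgebra.ad k L y ∘ₗ gradedProj p 0}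

theorem smul_mem_adDirections {β : Module.Dual k L} (hβ : β ∈ adDirections p) (c : k) :
    c • β ∈ adDirections p := by
  obtain ⟨d, hd, y, hy, φ, rfl⟩ := hβ
  exact ⟨d, hd, y, hy, c • φ, rfl⟩

variable [FiniteDimensional k L]

theorem comp_gradedProj_zero_mem_span_adDirections
    (hp : ∀ i j, ∀ x ∈ p i, ∀ y ∈ p j, ⁅x, y⁆ ∈ p (i + j))
    (hfaithful : ∀ x ∈ p 0, (∀ y ∈ (⨆ i ∈ {i : ℕ | 1 ≤ i}, p i), ⁅x, y⁆ = 0) → x = 0)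
    (ζ : Module.Dual k L) :
    ζ ∘ₗ gradedProj p 0 ∈ Submodule.span k (adDirections p) := by
  rw [← Subspace.dualCoannihilator_dualAnnihilator_eq (W := Submodule.span k (adDirections p)),
    Submodule.mem_dualAnnihilator]
  intro x hx
  rw [Submodule.mem_dualCoannihilator] at hx
  suffices hx0 : gradedProj p 0 x = 0 by simp [hx0]
  have hcomm : ⨆ i ∈ {i : ℕ | 1 ≤ i}, p i ≤
      LinearMap.ker (LieAlgebra.ad k L (gradedProj p 0 x)) := by
    refine iSup₂_le fun d hd y hy => ?_
    have hyx : ⁅y, gradedProj p 0 x⁆ = 0 := by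
      refine (Module.forall_dual_apply_eq_zero_iff k _).1 fun φ => ?_
      have hmem : ⁅y, gradedProj p 0 x⁆ ∈ p d := hp d 0 _ hy _ (gradedProj_mem p 0 x)
      simpa [gradedProj_of_mem p hmem] using
        hx _ (Submodule.subset_span ⟨d, hd, y, hy, φ, rfl⟩)
    rw [LinearMap.mem_ker, LieAlgebra.ad_apply, ← lie_skew, hyx, neg_zero]
  exact hfaithful _ (gradedProj_mem p 0 x) fun y hy => hcomm hy

variable [Infinite k] {q : coordRing k (Module.Dual k L)}

theorem evalAt_comp_gradedProj_zero {G : Type} [Group G] {ρ : Representation k G L}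
    (htorus : ∀ t : kˣ, ∃ g : G, ∀ j : ℕ, ∀ y ∈ p j, ρ g y = ((t : k) ^ j) • y)
    (hq : ∀ g v, evalAt (coadRep ρ g v) q = evalAt v q) (ξ : Module.Dual k L) :
    evalAt (ξ ∘ₗ gradedProj p 0) q = evalAt ξ q := by
  obtain ⟨N, hN⟩ := exists_forall_lt_eq_bot p
  refine evalAt_eq_of_forall_ne_zero q (fun j => ξ ∘ₗ gradedProj p j) N fun t ht => ?_
  obtain ⟨g, hg⟩ := htorus (Units.mk0 t ht)
  rw [Units.val_mk0] at hg
  rw [← evalAt_comp_eq_of_invariant hq g ξ, eq_sum_pow_smul_gradedProj p hN t hg]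
  congr 2 with x
  simp

theorem periodic_evalAt_of_mem_adDirections
    (hp : ∀ i j, ∀ x ∈ p i, ∀ y ∈ p j, ⁅x, y⁆ ∈ p (i + j)) (H : ConnAlgGroupOf k L)
    (htorus : ∀ t : kˣ, ∃ g : H.G, ∀ j : ℕ, ∀ y ∈ p j, H.Ad g y = ((t : k) ^ j) • y)
    (hq : ∀ g v, evalAt (coadRep H.Ad g v) q = evalAt v q) {β : Module.Dual k L}
    (hβ : β ∈ adDirections p) :
    Function.Periodic (fun ξ => evalAt ξ q) β := by
  obtain ⟨d, hd, y, hy, φ, rfl⟩ := hβ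
  rcases eq_or_ne y 0 with rfl | hy0
  · simp [Function.Periodic]
  -- `exp_mem` truncates the exponential at `finrank k L`, which must leave room for `ad y`.
  have hM : 2 ≤ Module.finrank k L + 1 := by
    have := nontrivial_of_ne y 0 hy0
    have := Module.finrank_pos (R := k) (M := L)
    omega
  obtain ⟨N, hN⟩ := exists_forall_lt_eq_bot p
  obtain ⟨g, hg⟩ := H.exp_mem y ⟨N + 1, ad_pow_eq_zero_of_mem hp hN hd hy⟩
  have hA := evalAt_comp_gradedProj_zero htorus hq
  intro ξ
  set ξ' := ξ ∘ₗ gradedProj p 0 + φ ∘ₗ gradedProj p d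
  have hexp := comp_truncExp_ad_comp_gradedProj_zero hp hd hy ξ φ hM
  rw [← hg] at hexp
  calc evalAt (ξ + φ ∘ₗ gradedProj p d ∘ₗ LieAlgebra.ad k L y ∘ₗ gradedProj p 0) q
      = evalAt (ξ' ∘ₗ H.Ad g ∘ₗ gradedProj p 0) q := by
        rw [hexp, ← hA]
        simp only [LinearMap.add_comp, LinearMap.comp_assoc, gradedProj_comp_self]
    _ = evalAt ξ' q := by
        rw [← LinearMap.comp_assoc, hA, evalAt_comp_eq_of_invariant hq]
    _ = evalAt ξ q := by
        rw [← hA, LinearMap.add_comp, LinearMap.comp_assoc, LinearMap.comp_assoc,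
          gradedProj_comp_self, gradedProj_comp_of_ne p hd.ne, LinearMap.comp_zero, add_zero, hA]

end GradedLie

theorem graded_no_regular_coadjoint_invariants_general
    (k L : Type) [Field k] [IsAlgClosed k]
    [LieRing L] [LieAlgebra k L] [FiniteDimensional k L]
    (p : ℕ → Submodule k L)
    -- `ℕ`-grading of the Lie algebra `h`:
    (hsup : (⨆ i, p i) = ⊤)
    (hindep : ∀ i : ℕ, Disjoint (p i) (⨆ j ∈ {j : ℕ | j ≠ i}, p j))
    (hbracket : ∀ i j : ℕ, ∀ x ∈ p i, ∀ y ∈ p j, ⁅x, y⁆ ∈ p (i + j))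
    -- `h₊` is a faithful `h(0)`-module:
    (hfaithful : ∀ x ∈ p 0, (∀ y ∈ (⨆ i ∈ {i : ℕ | 1 ≤ i}, p i), ⁅x, y⁆ = 0) → x = 0)
    -- `H` is the corresponding connected algebraic group; in particular the adjoint action
    -- of `H` realises the one-parameter torus determined by the grading:
    (H : ConnAlgGroupOf k L)
    (htorus : ∀ t : kˣ, ∃ g : H.G, ∀ j : ℕ, ∀ y ∈ p j, H.Ad g y = ((t : k) ^ j) • y) :
    invPolyAlg (coadRep H.Ad) = ⊥ := by
  let _ : DirectSum.Decomposition p :=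
    (DirectSum.isInternal_submodule_of_iSupIndep_of_iSup_eq_top hindep hsup).chooseDecomposition
  refine invPolyAlg_eq_bot_of_forall_evalAt_eq _ fun q hq ξ => ?_
  have hperiodic : Function.Periodic (fun ξ => evalAt ξ q) (ξ ∘ₗ gradedProj p 0) :=
    Function.Periodic.of_mem_span
      (fun β hβ c => periodic_evalAt_of_mem_adDirections hbracket H htorus hq
        (smul_mem_adDirections hβ c))
      (comp_gradedProj_zero_mem_span_adDirections hbracket hfaithful ξ)
  calc evalAt ξ q = evalAt (ξ ∘ₗ gradedProj p 0) q :=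
        (evalAt_comp_gradedProj_zero htorus hq ξ).symm
    _ = evalAt 0 q := by simpa using hperiodic 0

theorem graded_no_regular_coadjoint_invariants
    (k L : Type) [Field k] [IsAlgClosed k] [CharZero k]
    [LieRing L] [LieAlgebra k L] [FiniteDimensional k L]
    (p : ℕ → Submodule k L)
    -- `ℕ`-grading of the Lie algebra `h`:
    (hsup : (⨆ i, p i) = ⊤)
    (hindep : ∀ i : ℕ, Disjoint (p i) (⨆ j ∈ {j : ℕ | j ≠ i}, p j))
    (hbracket : ∀ i j : ℕ, ∀ x ∈ p i, ∀ y ∈ p j, ⁅x, y⁆ ∈ p (i + j))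
    -- `h₊ ≠ 0`:
    (hplus_ne : (⨆ i ∈ {i : ℕ | 1 ≤ i}, p i) ≠ ⊥)
    -- `h₊` is a faithful `h(0)`-module:
    (hfaithful : ∀ x ∈ p 0, (∀ y ∈ (⨆ i ∈ {i : ℕ | 1 ≤ i}, p i), ⁅x, y⁆ = 0) → x = 0)
    -- the grading element `x ∈ h(0)`:
    (hgrelt : ∃ x ∈ p 0, ∀ j : ℕ, ∀ y ∈ p j, ⁅x, y⁆ = (j : k) • y)
    -- `H` is the corresponding connected algebraic group; in particular the adjoint action
    -- of `H` realises the one-parameter torus determined by the grading: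
    (H : ConnAlgGroupOf k L)
    (htorus : ∀ t : kˣ, ∃ g : H.G, ∀ j : ℕ, ∀ y ∈ p j, H.Ad g y = ((t : k) ^ j) • y) :
    invPolyAlg (coadRep H.Ad) = ⊥ :=
  graded_no_regular_coadjoint_invariants_general k L p hsup hindep hbracket hfaithful H htorus

end
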